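/- Let p, q, r, s be real numbers and n a nonnegative integer such that (2i+(−1)^{n+1}+2)q + s ≠ 0 for all 0 ≤ i ≤ ⌊n/2⌋−1. Then the polynomial Φ_n(x) = S_n(p,q,r,s; x) satisfies, for all real x, the differential equation x²(px²+q) Φ_n''(x) + x(rx²+s) Φ_n'(x) − (n(r+(n−1)p) x² + ((1−(−1)^n)/2) s) Φ_n(x) = 0. -/

import Mathlib

/-!
Writing `n = 2m + ε` with `ε = n mod 2`, the operator of the equation sends `x ^ e` to
`A(e) x ^ (e + 2) + B(e) x ^ e` with `A(e) = (e - n)((e + n - 1)p + r)` and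
`B(e) = q e(e - 1) + s(e - ε)`. Applied to `S_n = ∑ₖ cₖ x ^ (n - 2k)`, the extreme terms vanish
because `A(n) = 0` and `B(ε) = 0`, and the remaining ones cancel in pairs,
`c_{k+1} A(n - 2k - 2) + c_k B(n - 2k) = 0`: with `j = m - k - 1` one has
`A(n - 2k - 2) = -2(k + 1) N_j` and `B(n - 2k) = 2(j + 1) D_j`, where `N_j / D_j` is the last
factor of the product in `c_k`, and `(k + 1) binom(m, k + 1) = (j + 1) binom(m, k)`.
-/

open Real Finset

noncomputable section

/-- The basic class of symmetric polynomials `S_n(p,q,r,s; x)`. -/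
def S (p q r s : ℝ) (n : ℕ) (x : ℝ) : ℝ :=
  ∑ k ∈ Finset.range (n / 2 + 1),
    ((n / 2).choose k : ℝ) *
      (∏ i ∈ Finset.range (n / 2 - k),
        ((2 * (i : ℝ) + (-1) ^ (n + 1) + 2 * ((n / 2 : ℕ) : ℝ)) * p + r) /
          ((2 * (i : ℝ) + (-1) ^ (n + 1) + 2) * q + s)) *
      x ^ (n - 2 * k)

lemma deriv_sum_const_mul_pow (c : ℕ → ℝ) (e : ℕ → ℕ) (t : Finset ℕ) :
    deriv (fun x : ℝ => ∑ k ∈ t, c k * x ^ e k)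
      = fun x => ∑ k ∈ t, c k * e k * x ^ (e k - 1) := by
  funext x
  rw [deriv_fun_sum fun k _ => (differentiableAt_pow _).const_mul _]
  refine sum_congr rfl fun k _ => ?_
  rw [deriv_const_mul _ (differentiableAt_pow _), deriv_pow_field, mul_assoc]

lemma ode_sum_const_mul_pow (p q r s a b : ℝ) (c : ℕ → ℝ) (e : ℕ → ℕ) (t : Finset ℕ) (x : ℝ) :
    let f := fun x : ℝ => ∑ k ∈ t, c k * x ^ e k
    x ^ 2 * (p * x ^ 2 + q) * iteratedDeriv 2 f x + x * (r * x ^ 2 + s) * deriv f x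
        - (a * x ^ 2 + b) * f x
      = ∑ k ∈ t, c k * ((p * e k * (e k - 1) + r * e k - a) * x ^ (e k + 2)
          + (q * e k * (e k - 1) + s * e k - b) * x ^ e k) := by
  intro f
  rw [iteratedDeriv_succ, iteratedDeriv_one, deriv_sum_const_mul_pow,
    deriv_sum_const_mul_pow (fun k => c k * e k) (fun k => e k - 1)]
  simp only [f, mul_sum, ← sum_add_distrib, ← sum_sub_distrib]
  refine sum_congr rfl fun k _ => ?_
  rcases e k with _ | _ | m <;> push_cast [Nat.add_sub_cancel] <;> ring

lemma neg_one_pow_eq_one_sub_two_mul_mod_two {R : Type*} [Ring R] (n : ℕ) :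
    (-1 : R) ^ n = 1 - 2 * ((n % 2 : ℕ) : R) := by
  rw [neg_one_pow_eq_pow_mod_two]
  rcases Nat.mod_two_eq_zero_or_one n with h | h <;> norm_num [h]

lemma mod_two_mul_mod_two_sub_one {R : Type*} [Ring R] (n : ℕ) :
    ((n % 2 : ℕ) : R) * ((n % 2 : ℕ) - 1) = 0 := by
  rcases Nat.mod_two_eq_zero_or_one n with h | h <;> simp [h]

lemma sum_range_succ_add_eq_zero {M : Type*} [AddCommMonoid M] (u v : ℕ → M) (m : ℕ)
    (hu : u 0 = 0) (hv : v m = 0) (huv : ∀ k < m, u (k + 1) + v k = 0) :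
    ∑ k ∈ range (m + 1), (u k + v k) = 0 := by
  rw [sum_add_distrib, sum_range_succ' u, sum_range_succ v, hu, hv, add_zero, add_zero,
    ← sum_add_distrib]
  exact sum_eq_zero fun k hk => huv k (mem_range.mp hk)

def binomProdCoeff (N D : ℕ → ℝ) (m k : ℕ) : ℝ :=
  m.choose k * ∏ i ∈ range (m - k), N i / D i

lemma succ_mul_binomProdCoeff_succ (N D : ℕ → ℝ) {m k : ℕ} (hk : k < m)
    (hD : D (m - k - 1) ≠ 0) :
    (k + 1 : ℝ) * binomProdCoeff N D m (k + 1) * N (m - k - 1)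
      = (m - k : ℕ) * binomProdCoeff N D m k * D (m - k - 1) := by
  obtain ⟨j, hj⟩ : ∃ j, m - k = j + 1 := ⟨m - k - 1, by omega⟩
  have hj' : m - (k + 1) = j := by omega
  have hchoose : (m.choose (k + 1) : ℝ) * (k + 1) = m.choose k * (j + 1) := by
    exact_mod_cast hj ▸ Nat.choose_succ_right_eq m k
  rw [binomProdCoeff, binomProdCoeff, hj', hj, Nat.add_sub_cancel, prod_range_succ]
  rw [hj, Nat.add_sub_cancel] at hD
  field_simp
  push_cast
  linear_combination (∏ i ∈ range j, N i / D i) * N j * hchoose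

namespace S

def num (p r : ℝ) (n i : ℕ) : ℝ :=
  (2 * (i : ℝ) + (-1) ^ (n + 1) + 2 * ((n / 2 : ℕ) : ℝ)) * p + r

def den (q s : ℝ) (n i : ℕ) : ℝ :=
  (2 * (i : ℝ) + (-1) ^ (n + 1) + 2) * q + s

def coeff (p q r s : ℝ) (n : ℕ) : ℕ → ℝ :=
  binomProdCoeff (num p r n) (den q s n) (n / 2)

lemma eq_sum (p q r s : ℝ) (n : ℕ) :
    S p q r s n = fun x => ∑ k ∈ range (n / 2 + 1), coeff p q r s n k * x ^ (n - 2 * k) :=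
  rfl

lemma coeff_succ_mul_add_coeff_mul {p q r s : ℝ} {n k : ℕ} (hk : k < n / 2)
    (hD : den q s n (n / 2 - k - 1) ≠ 0) :
    coeff p q r s n (k + 1) * (p * (n - 2 * (k + 1) : ℕ) * ((n - 2 * (k + 1) : ℕ) - 1)
        + r * (n - 2 * (k + 1) : ℕ) - n * (r + (n - 1) * p))
      + coeff p q r s n k * (q * (n - 2 * k : ℕ) * ((n - 2 * k : ℕ) - 1)
        + s * (n - 2 * k : ℕ) - (1 - (-1) ^ n) / 2 * s) = 0 := by
  set j := n / 2 - k - 1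
  have hrec : (k + 1 : ℝ) * coeff p q r s n (k + 1) * num p r n j
      = (n / 2 - k : ℕ) * coeff p q r s n k * den q s n j :=
    succ_mul_binomProdCoeff_succ _ _ hk hD
  have hsign := neg_one_pow_eq_one_sub_two_mul_mod_two (R := ℝ) n
  have hε := mod_two_mul_mod_two_sub_one (R := ℝ) n
  have hm : ((n / 2 : ℕ) : ℝ) = j + k + 1 := by exact_mod_cast (by omega : n / 2 = j + k + 1)
  have hn : (n : ℝ) = 2 * (j + k + 1) + (n % 2 : ℕ) := by
    exact_mod_cast (by omega : n = 2 * (j + k + 1) + n % 2)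
  have he₁ : n - 2 * (k + 1) = 2 * j + n % 2 := by omega
  have he₀ : n - 2 * k = 2 * j + 2 + n % 2 := by omega
  have hmk : n / 2 - k = j + 1 := by omega
  rw [num, den, hmk, hm, pow_succ, hsign] at hrec
  rw [he₁, he₀, hsign]
  push_cast at hrec ⊢
  rw [hn]
  linear_combination -2 * hrec + coeff p q r s n k * q * hε

end S

theorem ode_S (p q r s : ℝ) (n : ℕ)
    (h : ∀ i : ℕ, i < n / 2 → (2 * (i : ℝ) + (-1) ^ (n + 1) + 2) * q + s ≠ 0) (x : ℝ) :
    x ^ 2 * (p * x ^ 2 + q) * iteratedDeriv 2 (S p q r s n) x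
      + x * (r * x ^ 2 + s) * deriv (S p q r s n) x
      - ((n : ℝ) * (r + ((n : ℝ) - 1) * p) * x ^ 2 + (1 - (-1) ^ n) / 2 * s) * S p q r s n x
      = 0 := by
  rw [S.eq_sum, ode_sum_const_mul_pow]
  simp only [mul_add]
  refine sum_range_succ_add_eq_zero _ _ _ ?_ ?_ fun k hk => ?_
  · simp only [mul_zero, Nat.sub_zero]
    ring
  · rw [show n - 2 * (n / 2) = n % 2 by omega, neg_one_pow_eq_one_sub_two_mul_mod_two]
    linear_combination
      S.coeff p q r s n (n / 2) * x ^ (n % 2) * q * mod_two_mul_mod_two_sub_one (R := ℝ) n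
  · rw [show n - 2 * (k + 1) + 2 = n - 2 * k by omega]
    linear_combination x ^ (n - 2 * k) * S.coeff_succ_mul_add_coeff_mul hk (h _ (by omega))
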